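/- arXiv:1708.06924 — 4 statements merged into one kernel-verified Lean document; each statement's English description precedes it below -/
import Mathlib

section
/- For every α₁, α₂, w₁, w₂ ∈ ℂ, one has ‖α₁ K_{w₁} + α₂ K_{w₂}‖_∞ ≥ ρ(w₁,w₂) · ( |α₁| e^{|w₁|²/2} + |α₂| e^{|w₂|²/2} ), i.e. sup_{z∈ℂ} |α₁ e^{\overline{w₁} z} + α₂ e^{\overline{w₂} z}| e^{-|z|²/2} ≥ (|w₁−w₂|² / (2(2+|w₁−w₂|²))) · ( |α₁| e^{|w₁|²/2} + |α₂| e^{|w₂|²/2} ). -/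
/-!
Each weighted kernel is a Gaussian bump: `|e^{w̄z}| e^{-|z|²/2} = e^{|w|²/2} e^{-|z-w|²/2}`.
With `Mᵢ = |αᵢ| e^{|wᵢ|²/2}` and `t = e^{-|w₁-w₂|²/2}`, evaluating at the centres `z = w₁` and
`z = w₂` and using the reverse triangle inequality bounds the supremum below by `M₁ - t M₂` and by
`M₂ - t M₁`, hence by `(1 - t)(M₁ + M₂)/2`; finally `1 - e^{-δ} ≥ δ/(1+δ)` for
`δ = |w₁-w₂|²/2` gives `(1 - t)/2 ≥ ρ`. The bumps are bounded by their heights, so the real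
supremum is not the junk value of an unbounded family.
-/

open MeasureTheory Filter Bornology
open scoped ENNReal

/-- The (quasi-)norm of the Fock space `F^p`, valued in `ℝ≥0∞`. -/
noncomputable def fockNorm (p : ℝ) (f : ℂ → ℂ) : ℝ≥0∞ :=
  (ENNReal.ofReal (p / (2 * Real.pi)) *
    ∫⁻ z : ℂ, ENNReal.ofReal
      (‖f z‖ ^ p * Real.exp (-(p * ‖z‖ ^ 2) / 2))) ^ (1 / p)

/-- Membership in the Fock space `F^p`: entire with finite Fock norm. -/
def MemFock (p : ℝ) (f : ℂ → ℂ) : Prop :=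
  Differentiable ℂ f ∧ fockNorm p f < ⊤

/-- `T` is bounded from `F^p` to `F^q`. -/
def FockBounded (p q : ℝ) (T : (ℂ → ℂ) → ℂ → ℂ) : Prop :=
  ∃ C : ℝ, 0 ≤ C ∧ ∀ f : ℂ → ℂ, MemFock p f →
    MemFock q (T f) ∧ fockNorm q (T f) ≤ ENNReal.ofReal C * fockNorm p f

/-- `T` is compact from `F^p` to `F^q`. -/
def FockCompact (p q : ℝ) (T : (ℂ → ℂ) → ℂ → ℂ) : Prop :=
  FockBounded p q T ∧
    ∀ f : ℕ → ℂ → ℂ, (∀ n, MemFock p (f n) ∧ fockNorm p (f n) ≤ 1) →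
      ∃ φ : ℕ → ℕ, StrictMono φ ∧ ∃ g : ℂ → ℂ, MemFock q g ∧
        Tendsto (fun k => fockNorm q (fun z => T (f (φ k)) z - g z)) atTop (nhds 0)

/-- The quantity `m_z(ψ, φ) = |ψ(z)| e^{(|φ(z)|² - |z|²)/2}`. -/
noncomputable def mz (ψ φ : ℂ → ℂ) (z : ℂ) : ℝ :=
  ‖ψ z‖ * Real.exp ((‖φ z‖ ^ 2 - ‖z‖ ^ 2) / 2)

/-- `ρ(w₁, w₂) = |w₁ - w₂|² / (2(2 + |w₁ - w₂|²))`. -/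
noncomputable def rho (w₁ w₂ : ℂ) : ℝ :=
  ‖w₁ - w₂‖ ^ 2 / (2 * (2 + ‖w₁ - w₂‖ ^ 2))

/-- The kernel `K_w(z) = e^{\overline{w} z}`. -/
noncomputable def Kfun (w : ℂ) : ℂ → ℂ :=
  fun z => Complex.exp (starRingEnd ℂ w * z)

/-- The normalized kernel `k_w(z) = e^{\overline{w} z - |w|²/2}`. -/
noncomputable def kfun (w : ℂ) : ℂ → ℂ :=
  fun z => Complex.exp (starRingEnd ℂ w * z - (‖w‖ : ℂ) ^ 2 / 2)

/-- The essential norm of `L : F^p → F^q`. -/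
noncomputable def essNorm (p q : ℝ) (L : (ℂ → ℂ) → ℂ → ℂ) : ℝ≥0∞ :=
  sInf { s : ℝ≥0∞ | ∃ K : (ℂ → ℂ) → ℂ → ℂ, IsLinearMap ℂ K ∧ FockCompact p q K ∧
    s = ⨆ f : {f : ℂ → ℂ // MemFock p f ∧ fockNorm p f ≤ 1},
          fockNorm q (fun z => L f.1 z - K f.1 z) }


lemma norm_exp_conj_mul_mul_gaussian (w z : ℂ) :
    ‖Complex.exp (starRingEnd ℂ w * z)‖ * Real.exp (-(‖z‖ ^ 2) / 2) =
      Real.exp (‖w‖ ^ 2 / 2) * Real.exp (-(‖z - w‖ ^ 2) / 2) := by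
  rw [Complex.norm_exp, ← Real.exp_add, ← Real.exp_add]
  congr 1
  have hre : (starRingEnd ℂ w * z).re = (z * starRingEnd ℂ w).re := by rw [mul_comm]
  rw [hre, Complex.sq_norm, Complex.sq_norm, Complex.sq_norm, Complex.normSq_sub]
  ring

lemma norm_mul_exp_conj_mul_mul_gaussian (α w z : ℂ) :
    ‖α * Complex.exp (starRingEnd ℂ w * z)‖ * Real.exp (-(‖z‖ ^ 2) / 2) =
      ‖α‖ * Real.exp (‖w‖ ^ 2 / 2) * Real.exp (-(‖z - w‖ ^ 2) / 2) := by
  rw [norm_mul, mul_assoc, norm_exp_conj_mul_mul_gaussian, mul_assoc]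

lemma norm_mul_exp_conj_mul_mul_gaussian_le (α w z : ℂ) :
    ‖α * Complex.exp (starRingEnd ℂ w * z)‖ * Real.exp (-(‖z‖ ^ 2) / 2) ≤
      ‖α‖ * Real.exp (‖w‖ ^ 2 / 2) := by
  rw [norm_mul_exp_conj_mul_mul_gaussian]
  refine mul_le_of_le_one_right (by positivity) (Real.exp_le_one_iff.mpr ?_)
  have := sq_nonneg ‖z - w‖
  linarith

lemma norm_mul_exp_conj_mul_self_mul_gaussian (α w : ℂ) :
    ‖α * Complex.exp (starRingEnd ℂ w * w)‖ * Real.exp (-(‖w‖ ^ 2) / 2) =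
      ‖α‖ * Real.exp (‖w‖ ^ 2 / 2) := by
  rw [norm_mul_exp_conj_mul_mul_gaussian, sub_self, norm_zero]
  simp

lemma bddAbove_range_norm_kernel_sum_mul_gaussian (α₁ α₂ w₁ w₂ : ℂ) :
    BddAbove (Set.range fun z : ℂ => ‖α₁ * Complex.exp (starRingEnd ℂ w₁ * z) +
      α₂ * Complex.exp (starRingEnd ℂ w₂ * z)‖ * Real.exp (-(‖z‖ ^ 2) / 2)) := by
  refine ⟨‖α₁‖ * Real.exp (‖w₁‖ ^ 2 / 2) + ‖α₂‖ * Real.exp (‖w₂‖ ^ 2 / 2), ?_⟩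
  rintro _ ⟨z, rfl⟩
  dsimp only
  calc _ ≤ (‖α₁ * Complex.exp (starRingEnd ℂ w₁ * z)‖ +
          ‖α₂ * Complex.exp (starRingEnd ℂ w₂ * z)‖) * Real.exp (-(‖z‖ ^ 2) / 2) := by
        gcongr; exact norm_add_le _ _
    _ ≤ _ := by
        rw [add_mul]
        exact add_le_add (norm_mul_exp_conj_mul_mul_gaussian_le α₁ w₁ z)
          (norm_mul_exp_conj_mul_mul_gaussian_le α₂ w₂ z)

lemma sub_le_norm_kernel_sum_mul_gaussian_at (α₁ α₂ w₁ w₂ : ℂ) :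
    ‖α₁‖ * Real.exp (‖w₁‖ ^ 2 / 2) -
        Real.exp (-(‖w₁ - w₂‖ ^ 2) / 2) * (‖α₂‖ * Real.exp (‖w₂‖ ^ 2 / 2)) ≤
      ‖α₁ * Complex.exp (starRingEnd ℂ w₁ * w₁) +
          α₂ * Complex.exp (starRingEnd ℂ w₂ * w₁)‖ * Real.exp (-(‖w₁‖ ^ 2) / 2) :=
  calc _ = (‖α₁ * Complex.exp (starRingEnd ℂ w₁ * w₁)‖ -
          ‖α₂ * Complex.exp (starRingEnd ℂ w₂ * w₁)‖) * Real.exp (-(‖w₁‖ ^ 2) / 2) := by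
        rw [sub_mul, norm_mul_exp_conj_mul_self_mul_gaussian,
          norm_mul_exp_conj_mul_mul_gaussian, mul_comm (Real.exp _)]
    _ ≤ _ := by gcongr; exact norm_sub_le_norm_add _ _

lemma div_one_add_le_one_sub_exp_neg {x : ℝ} (hx : 0 ≤ x) : x / (1 + x) ≤ 1 - Real.exp (-x) := by
  have hexp : (1 + x) * Real.exp (-x) ≤ 1 := by
    calc (1 + x) * Real.exp (-x) ≤ Real.exp x * Real.exp (-x) := by
          gcongr; linarith [Real.add_one_le_exp x]
      _ = 1 := by rw [← Real.exp_add, add_neg_cancel, Real.exp_zero]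
  rw [div_le_iff₀ (by positivity)]
  nlinarith

-- `2ρ = δ / (1 + δ)` with `δ = |w₁ - w₂|² / 2`.
lemma rho_le_one_sub_exp_neg_div_two (w₁ w₂ : ℂ) :
    rho w₁ w₂ ≤ (1 - Real.exp (-(‖w₁ - w₂‖ ^ 2) / 2)) / 2 := by
  have key := div_one_add_le_one_sub_exp_neg (x := ‖w₁ - w₂‖ ^ 2 / 2) (by positivity)
  have hrho : rho w₁ w₂ = ‖w₁ - w₂‖ ^ 2 / 2 / (1 + ‖w₁ - w₂‖ ^ 2 / 2) / 2 := by
    unfold rho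
    field_simp
  rw [hrho, neg_div]
  linarith

/-- `‖α₁ K_{w₁} + α₂ K_{w₂}‖_∞ ≥ ρ(w₁,w₂) (|α₁| e^{|w₁|²/2} + |α₂| e^{|w₂|²/2})`. -/
theorem kernel_sum_lower_estimate (α₁ α₂ w₁ w₂ : ℂ) :
    rho w₁ w₂ * (‖α₁‖ * Real.exp (‖w₁‖ ^ 2 / 2) +
        ‖α₂‖ * Real.exp (‖w₂‖ ^ 2 / 2)) ≤
      ⨆ z : ℂ, ‖α₁ * Complex.exp (starRingEnd ℂ w₁ * z) +
          α₂ * Complex.exp (starRingEnd ℂ w₂ * z)‖ * Real.exp (-(‖z‖ ^ 2) / 2) := by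
  set M₁ := ‖α₁‖ * Real.exp (‖w₁‖ ^ 2 / 2)
  set M₂ := ‖α₂‖ * Real.exp (‖w₂‖ ^ 2 / 2)
  set t := Real.exp (-(‖w₁ - w₂‖ ^ 2) / 2)
  set S := ⨆ z : ℂ, ‖α₁ * Complex.exp (starRingEnd ℂ w₁ * z) +
    α₂ * Complex.exp (starRingEnd ℂ w₂ * z)‖ * Real.exp (-(‖z‖ ^ 2) / 2)
  have hbdd := bddAbove_range_norm_kernel_sum_mul_gaussian α₁ α₂ w₁ w₂
  have at_w₁ : M₁ - t * M₂ ≤ S :=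
    (sub_le_norm_kernel_sum_mul_gaussian_at α₁ α₂ w₁ w₂).trans (le_ciSup hbdd w₁)
  have at_w₂ : M₂ - t * M₁ ≤ S := by
    refine le_trans ?_ (le_ciSup hbdd w₂)
    have h := sub_le_norm_kernel_sum_mul_gaussian_at α₂ α₁ w₂ w₁
    rwa [norm_sub_rev w₂ w₁, add_comm (α₂ * _)] at h
  have hM : 0 ≤ M₁ + M₂ := by positivity
  calc rho w₁ w₂ * (M₁ + M₂) ≤ (1 - t) / 2 * (M₁ + M₂) :=
        mul_le_mul_of_nonneg_right (rho_le_one_sub_exp_neg_div_two w₁ w₂) hM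
    _ ≤ _ := by linear_combination (at_w₁ + at_w₂) / 2
end

section
/- For every α₁, α₂, w₁, w₂ ∈ ℂ, one has 2 · sup_{z∈ℂ} |α₁ e^{\overline{w₁} z} + α₂ e^{\overline{w₂} z}| e^{-|z|²/2} ≥ ( |α₁| e^{|w₁|²/2} + |α₂| e^{|w₂|²/2} ) · ( 1 − e^{-|w₁−w₂|²/2} ). -/
open MeasureTheory Filter Bornology
open scoped ENNReal

/-!
Up to the factor `‖α‖`, the weighted kernel `|K_w(z)| e^{-|z|²/2}` equals the Gaussian bump
`e^{|w|²/2} e^{-|z - w|²/2}`, so it is bounded by its value `e^{|w|²/2}` at `z = w`.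
Evaluating the sum at `z = w₁` and at `z = w₂` and using the reverse triangle inequality gives
`A₁ - A₂ q ≤ S` and `A₂ - A₁ q ≤ S`, where `Aᵢ = |αᵢ| e^{|wᵢ|²/2}`, `q = e^{-|w₁ - w₂|²/2}` and
`S` is the supremum; adding the two is the claim.
-/

open ComplexConjugate

theorem norm_mul_exp_conj_mul_mul_exp (α w z : ℂ) :
    ‖α * Complex.exp (conj w * z)‖ * Real.exp (-(‖z‖ ^ 2) / 2) =
      ‖α‖ * Real.exp (‖w‖ ^ 2 / 2) * Real.exp (-(‖z - w‖ ^ 2) / 2) := by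
  have exponent : (conj w * z).re + -(‖z‖ ^ 2) / 2 = ‖w‖ ^ 2 / 2 + -(‖z - w‖ ^ 2) / 2 := by
    simp only [Complex.sq_norm, Complex.normSq_apply, Complex.mul_re, Complex.conj_re,
      Complex.conj_im, Complex.sub_re, Complex.sub_im]
    ring
  rw [norm_mul, Complex.norm_exp, mul_assoc, mul_assoc, ← Real.exp_add, ← Real.exp_add,
    exponent]

theorem norm_mul_exp_conj_mul_mul_exp_le (α w z : ℂ) :
    ‖α * Complex.exp (conj w * z)‖ * Real.exp (-(‖z‖ ^ 2) / 2) ≤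
      ‖α‖ * Real.exp (‖w‖ ^ 2 / 2) := by
  rw [norm_mul_exp_conj_mul_mul_exp]
  refine mul_le_of_le_one_right (by positivity) (Real.exp_le_one_iff.2 ?_)
  have := sq_nonneg ‖z - w‖
  linarith

section KernelPair

variable (α₁ α₂ w₁ w₂ : ℂ)

theorem bddAbove_range_norm_add_kernels_mul_exp :
    BddAbove (Set.range fun z : ℂ => ‖α₁ * Complex.exp (conj w₁ * z) +
      α₂ * Complex.exp (conj w₂ * z)‖ * Real.exp (-(‖z‖ ^ 2) / 2)) := by
  refine ⟨‖α₁‖ * Real.exp (‖w₁‖ ^ 2 / 2) + ‖α₂‖ * Real.exp (‖w₂‖ ^ 2 / 2), ?_⟩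
  rintro _ ⟨z, rfl⟩
  calc _ ≤ (‖α₁ * Complex.exp (conj w₁ * z)‖ + ‖α₂ * Complex.exp (conj w₂ * z)‖) *
        Real.exp (-(‖z‖ ^ 2) / 2) :=
          mul_le_mul_of_nonneg_right (norm_add_le _ _) (Real.exp_nonneg _)
    _ ≤ _ := by
      rw [add_mul]
      exact add_le_add (norm_mul_exp_conj_mul_mul_exp_le ..) (norm_mul_exp_conj_mul_mul_exp_le ..)

theorem sub_le_norm_add_kernels_mul_exp_at_left :
    ‖α₁‖ * Real.exp (‖w₁‖ ^ 2 / 2) -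
        ‖α₂‖ * Real.exp (‖w₂‖ ^ 2 / 2) * Real.exp (-(‖w₁ - w₂‖ ^ 2) / 2) ≤
      ‖α₁ * Complex.exp (conj w₁ * w₁) + α₂ * Complex.exp (conj w₂ * w₁)‖ *
        Real.exp (-(‖w₁‖ ^ 2) / 2) := by
  have at_center := norm_mul_exp_conj_mul_mul_exp α₁ w₁ w₁
  rw [sub_self, norm_zero, zero_pow two_ne_zero, neg_zero, zero_div, Real.exp_zero,
    mul_one] at at_center
  rw [← at_center, ← norm_mul_exp_conj_mul_mul_exp, ← sub_mul]
  gcongr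
  exact norm_sub_le_norm_add _ _

end KernelPair

/-- `2 ‖α₁ K_{w₁} + α₂ K_{w₂}‖_∞ ≥
(|α₁| e^{|w₁|²/2} + |α₂| e^{|w₂|²/2})(1 - e^{-|w₁-w₂|²/2})`. -/
theorem kernel_sum_lower_estimate' (α₁ α₂ w₁ w₂ : ℂ) :
    (‖α₁‖ * Real.exp (‖w₁‖ ^ 2 / 2) +
        ‖α₂‖ * Real.exp (‖w₂‖ ^ 2 / 2)) *
      (1 - Real.exp (-(‖w₁ - w₂‖ ^ 2) / 2)) ≤
    2 * ⨆ z : ℂ, ‖α₁ * Complex.exp (starRingEnd ℂ w₁ * z) +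
        α₂ * Complex.exp (starRingEnd ℂ w₂ * z)‖ * Real.exp (-(‖z‖ ^ 2) / 2) := by
  have hbdd := bddAbove_range_norm_add_kernels_mul_exp α₁ α₂ w₁ w₂
  have at_w₁ := (sub_le_norm_add_kernels_mul_exp_at_left α₁ α₂ w₁ w₂).trans (le_ciSup hbdd w₁)
  have at_w₂ := sub_le_norm_add_kernels_mul_exp_at_left α₂ α₁ w₂ w₁
  rw [norm_sub_rev, add_comm (α₂ * _)] at at_w₂
  linarith [at_w₂.trans (le_ciSup hbdd w₂)]
end

section
/- Let p, q ∈ (1,∞) and let T be a linear map that is compact from F^p to F^q. Then for every sequence (w_n) in ℂ with |w_n| → ∞, one has ‖T k_{w_n}‖_q → 0. -/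
open MeasureTheory Filter Bornology
open scoped ENNReal

/-!
Every subsequence of `T k_{w_n}` has, by compactness, a further subsequence converging in `F^q`
to some `g`, so it suffices to show `‖g‖_q = 0`. Far along that subsequence pick `n` centres
`v_i` at mutual distance at least `d`. Since `|k_v(z)| e^{-|z|²/2} = e^{-|z-v|²/2}`, the average
`s` of the `k_{v_i}` satisfies `|s(z)| e^{-|z|²/2} ≤ 1/n + e^{-d²/8}` and `‖s‖_1 ≤ 1`, whence
`‖s‖_p^p ≤ p (1/n + e^{-d²/8})^{p-1}`, which is small because `p > 1`. So `T s` is small in `F^q`,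
while by linearity `T s` is an average of functions close to `g`.
-/

open Real Topology

noncomputable def fockModulus (f : ℂ → ℂ) (z : ℂ) : ℝ :=
  ‖f z‖ * exp (-‖z‖ ^ 2 / 2)

lemma fockModulus_nonneg (f : ℂ → ℂ) (z : ℂ) : 0 ≤ fockModulus f z := by
  unfold fockModulus; positivity

lemma fockModulus_rpow (p : ℝ) (f : ℂ → ℂ) (z : ℂ) :
    fockModulus f z ^ p = ‖f z‖ ^ p * exp (-(p * ‖z‖ ^ 2) / 2) := by
  rw [fockModulus, mul_rpow (norm_nonneg _) (exp_pos _).le, ← exp_mul]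
  ring_nf

lemma fockNorm_eq_lintegral {p : ℝ} (hp : 0 ≤ p) (f : ℂ → ℂ) :
    fockNorm p f = (ENNReal.ofReal (p / (2 * π)) *
      ∫⁻ z, ENNReal.ofReal (fockModulus f z) ^ p) ^ (1 / p) := by
  simp only [fockNorm, ← fockModulus_rpow p,
    ENNReal.ofReal_rpow_of_nonneg (fockModulus_nonneg f _) hp]

lemma AEMeasurable.ofReal_fockModulus {f : ℂ → ℂ} (hf : AEMeasurable f) :
    AEMeasurable fun z => ENNReal.ofReal (fockModulus f z) := by
  unfold fockModulus; fun_prop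

lemma fockNorm_congr_norm {p : ℝ} {f g : ℂ → ℂ} (h : ∀ z, ‖f z‖ = ‖g z‖) :
    fockNorm p f = fockNorm p g := by
  simp only [fockNorm, h]

lemma fockNorm_sub_comm (p : ℝ) (f g : ℂ → ℂ) : fockNorm p (f - g) = fockNorm p (g - f) :=
  fockNorm_congr_norm fun z => norm_sub_rev (f z) (g z)

lemma fockNorm_zero {p : ℝ} (hp : 0 < p) : fockNorm p 0 = 0 := by
  simp [fockNorm, zero_rpow hp.ne', hp]

lemma fockNorm_smul {p : ℝ} (hp : 0 < p) (c : ℂ) (f : ℂ → ℂ) :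
    fockNorm p (c • f) = ‖c‖ₑ * fockNorm p f := by
  have hmod : ∀ z, ENNReal.ofReal (fockModulus (c • f) z) ^ p
      = ‖c‖ₑ ^ p * ENNReal.ofReal (fockModulus f z) ^ p := by
    intro z
    rw [fockModulus, fockModulus, Pi.smul_apply, smul_eq_mul, norm_mul, mul_assoc,
      ENNReal.ofReal_mul (norm_nonneg c), ofReal_norm, ENNReal.mul_rpow_of_nonneg _ _ hp.le]
  rw [fockNorm_eq_lintegral hp.le, fockNorm_eq_lintegral hp.le]
  simp only [hmod]
  rw [lintegral_const_mul' _ _ (ENNReal.rpow_ne_top_of_nonneg hp.le enorm_ne_top),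
    mul_left_comm, ENNReal.mul_rpow_of_nonneg _ _ (by positivity), ← ENNReal.rpow_mul,
    mul_one_div_cancel hp.ne', ENNReal.rpow_one]

lemma fockNorm_add_le {p : ℝ} (hp : 1 ≤ p) {f g : ℂ → ℂ} (hf : AEMeasurable f)
    (hg : AEMeasurable g) : fockNorm p (f + g) ≤ fockNorm p f + fockNorm p g := by
  have hp0 : 0 ≤ p := zero_le_one.trans hp
  simp only [fockNorm_eq_lintegral hp0, ENNReal.mul_rpow_of_nonneg _ _ (one_div_nonneg.2 hp0),
    ← mul_add]
  gcongr
  calc (∫⁻ z, ENNReal.ofReal (fockModulus (f + g) z) ^ p) ^ (1 / p)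
      ≤ (∫⁻ z, (ENNReal.ofReal (fockModulus f z) + ENNReal.ofReal (fockModulus g z)) ^ p)
          ^ (1 / p) := by
        gcongr with z
        rw [← ENNReal.ofReal_add (fockModulus_nonneg f z) (fockModulus_nonneg g z),
          fockModulus, fockModulus, fockModulus, ← add_mul]
        gcongr
        exact norm_add_le _ _
    _ ≤ _ := ENNReal.lintegral_Lp_add_le hf.ofReal_fockModulus hg.ofReal_fockModulus hp

lemma fockNorm_sum_le {p : ℝ} (hp : 1 ≤ p) {ι : Type*} (s : Finset ι) {F : ι → ℂ → ℂ}
    (hF : ∀ i ∈ s, AEMeasurable (F i)) :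
    fockNorm p (∑ i ∈ s, F i) ≤ ∑ i ∈ s, fockNorm p (F i) := by
  classical
  induction s using Finset.induction_on with
  | empty => simp [fockNorm_zero (zero_lt_one.trans_le hp)]
  | insert a s ha ih =>
    rw [Finset.sum_insert ha, Finset.sum_insert ha]
    have hs : ∀ i ∈ s, AEMeasurable (F i) := fun i hi => hF i (Finset.mem_insert_of_mem hi)
    calc fockNorm p (F a + ∑ i ∈ s, F i)
        ≤ fockNorm p (F a) + fockNorm p (∑ i ∈ s, F i) :=
          fockNorm_add_le hp (hF a (Finset.mem_insert_self a s)) (Finset.aemeasurable_sum s hs)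
      _ ≤ _ := by gcongr; exact ih hs

lemma fockNorm_le_add_sub {q : ℝ} (hq : 1 ≤ q) {f g : ℂ → ℂ} (hf : AEMeasurable f)
    (hg : AEMeasurable g) : fockNorm q f ≤ fockNorm q g + fockNorm q (f - g) := by
  simpa using fockNorm_add_le hq hg (hf.sub hg)

lemma fockNorm_rpow_le_of_fockModulus_le {p : ℝ} (hp : 1 ≤ p) {f : ℂ → ℂ} {M : ℝ}
    (hM : ∀ z, fockModulus f z ≤ M) :
    fockNorm p f ^ p ≤ ENNReal.ofReal (p * M ^ (p - 1)) * fockNorm 1 f := by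
  have hp0 : 0 < p := zero_lt_one.trans_le hp
  have hpow : ∀ z, fockModulus f z ^ p ≤ M ^ (p - 1) * fockModulus f z := fun z => by
    have h0 := fockModulus_nonneg f z
    calc fockModulus f z ^ p = fockModulus f z ^ (p - 1) * fockModulus f z := by
          rw [← rpow_add_one' h0 (by linarith), sub_add_cancel]
      _ ≤ M ^ (p - 1) * fockModulus f z := by
          gcongr
          exact hM z
  have hM0 : 0 ≤ M := (fockModulus_nonneg f 0).trans (hM 0)
  rw [fockNorm_eq_lintegral hp0.le, fockNorm_eq_lintegral zero_le_one, ← ENNReal.rpow_mul,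
    one_div_mul_cancel hp0.ne', ENNReal.rpow_one, div_one, ENNReal.rpow_one, one_div]
  simp only [ENNReal.ofReal_rpow_of_nonneg (fockModulus_nonneg f _) hp0.le, ENNReal.rpow_one]
  calc ENNReal.ofReal (p / (2 * π)) * ∫⁻ z, ENNReal.ofReal (fockModulus f z ^ p)
      ≤ ENNReal.ofReal (p / (2 * π)) *
          ∫⁻ z, ENNReal.ofReal (M ^ (p - 1)) * ENNReal.ofReal (fockModulus f z) := by
        gcongr with z
        rw [← ENNReal.ofReal_mul (by positivity)]
        exact ENNReal.ofReal_le_ofReal (hpow z)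
    _ = ENNReal.ofReal (p * M ^ (p - 1)) *
          (ENNReal.ofReal (2 * π)⁻¹ * ∫⁻ z, ENNReal.ofReal (fockModulus f z)) := by
        rw [lintegral_const_mul' _ _ ENNReal.ofReal_ne_top, ← mul_assoc, ← mul_assoc,
          ← ENNReal.ofReal_mul (by positivity), ← ENNReal.ofReal_mul (by positivity)]
        congr 2
        ring

lemma fockModulus_kfun (w z : ℂ) : fockModulus (kfun w) z = exp (-‖z - w‖ ^ 2 / 2) := by
  rw [fockModulus, kfun, Complex.norm_exp, ← exp_add]
  congr 1
  simp only [Complex.sub_re, Complex.mul_re, Complex.conj_re, Complex.conj_im,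
    Complex.div_ofNat_re, ← Complex.ofReal_pow, Complex.ofReal_re, Complex.sq_norm,
    Complex.normSq_apply, Complex.sub_im]
  ring

lemma lintegral_exp_neg_mul_sq_norm_sub {b : ℝ} (hb : 0 < b) (w : ℂ) :
    ∫⁻ z : ℂ, ENNReal.ofReal (exp (-b * ‖z - w‖ ^ 2)) = ENNReal.ofReal (π / b) := by
  have hint : ∫ z : ℂ, exp (-b * ‖z‖ ^ 2) = π / b := by
    rw [GaussianFourier.integral_rexp_neg_mul_sq_norm hb]
    simp
  rw [lintegral_sub_right_eq_self (fun z => ENNReal.ofReal (exp (-b * ‖z‖ ^ 2))) w,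
    ← ofReal_integral_eq_lintegral_ofReal
      (Integrable.of_integral_ne_zero (by rw [hint]; positivity))
      (Eventually.of_forall fun z => (exp_pos _).le), hint]

lemma fockNorm_kfun {p : ℝ} (hp : 0 < p) (w : ℂ) : fockNorm p (kfun w) = 1 := by
  have hmod : ∀ z, ENNReal.ofReal (fockModulus (kfun w) z) ^ p
      = ENNReal.ofReal (exp (-(p / 2) * ‖z - w‖ ^ 2)) := fun z => by
    rw [fockModulus_kfun, ENNReal.ofReal_rpow_of_nonneg (exp_pos _).le hp.le, ← exp_mul]
    ring_nf
  simp only [fockNorm_eq_lintegral hp.le, hmod, lintegral_exp_neg_mul_sq_norm_sub (half_pos hp),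
    ← ENNReal.ofReal_mul (div_nonneg hp.le two_pi_pos.le)]
  rw [show p / (2 * π) * (π / (p / 2)) = 1 by field_simp]
  simp

lemma memFock_kfun {p : ℝ} (hp : 0 < p) (w : ℂ) : MemFock p (kfun w) :=
  ⟨by unfold kfun; fun_prop, by simp [fockNorm_kfun hp]⟩

lemma MemFock.aemeasurable {p : ℝ} {f : ℂ → ℂ} (hf : MemFock p f) : AEMeasurable f :=
  hf.1.continuous.aemeasurable

lemma sum_exp_neg_sq_norm_sub_le {ι : Type*} [Fintype ι] {v : ι → ℂ} {d : ℝ} (hd : 0 ≤ d)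
    (hv : Pairwise fun i j => d ≤ ‖v i - v j‖) (z : ℂ) :
    ∑ i, exp (-‖z - v i‖ ^ 2 / 2) ≤ 1 + Fintype.card ι * exp (-d ^ 2 / 8) := by
  classical
  set S := Finset.univ.filter fun i => ‖z - v i‖ < d / 2
  have hS : S.card ≤ 1 := Finset.card_le_one.2 fun i hi j hj => by
    by_contra hij
    simp only [S, Finset.mem_filter, Finset.mem_univ, true_and] at hi hj
    have := norm_sub_le_norm_sub_add_norm_sub (v i) z (v j)
    rw [norm_sub_rev (v i) z] at this
    linarith [hv hij]
  have hterm : ∀ i, exp (-‖z - v i‖ ^ 2 / 2) ≤ (if i ∈ S then 1 else 0) + exp (-d ^ 2 / 8) := by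
    intro i
    split_ifs with hi
    · have : exp (-‖z - v i‖ ^ 2 / 2) ≤ 1 := exp_le_one_iff.2 (by nlinarith [sq_nonneg ‖z - v i‖])
      linarith [exp_pos (-d ^ 2 / 8)]
    · simp only [S, Finset.mem_filter, Finset.mem_univ, true_and, not_lt] at hi
      rw [zero_add, exp_le_exp]
      nlinarith
  calc ∑ i, exp (-‖z - v i‖ ^ 2 / 2)
      ≤ ∑ i, ((if i ∈ S then 1 else 0) + exp (-d ^ 2 / 8)) := Finset.sum_le_sum fun i _ => hterm i
    _ = S.card + Fintype.card ι * exp (-d ^ 2 / 8) := by simp [Finset.sum_add_distrib]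
    _ ≤ 1 + Fintype.card ι * exp (-d ^ 2 / 8) := by
        gcongr
        exact_mod_cast hS

lemma enorm_natCast_inv {n : ℕ} (hn : n ≠ 0) : ‖(n : ℂ)⁻¹‖ₑ = (n : ℝ≥0∞)⁻¹ := by
  rw [enorm_inv (Nat.cast_ne_zero.2 hn), ← ofReal_norm, Complex.norm_natCast,
    ENNReal.ofReal_natCast]

lemma exists_pairwise_dist_le_of_tendsto_norm {E : Type*} [NormedAddCommGroup E] {u : ℕ → E}
    (hu : Tendsto (fun k => ‖u k‖) atTop atTop) (K : ℕ) (d : ℝ) :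
    ∃ κ : ℕ → ℕ, (∀ i, K ≤ κ i) ∧ Pairwise fun i j => d ≤ ‖u (κ i) - u (κ j)‖ := by
  obtain ⟨κ, hK, hsep⟩ := exists_seq_of_forall_finset_exists (K ≤ ·)
    (fun a b => d ≤ ‖u a - u b‖) fun s _ => by
      obtain ⟨y, hy, hKy⟩ :=
        ((hu.eventually_ge_atTop (d + ∑ x ∈ s, ‖u x‖)).and (eventually_ge_atTop K)).exists
      refine ⟨y, hKy, fun x hx => ?_⟩
      have := Finset.single_le_sum (fun x _ => norm_nonneg (u x)) hx
      rw [norm_sub_rev]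
      linarith [norm_sub_norm_le (u y) (u x)]
  exact ⟨κ, hK, fun i j hij => (lt_or_gt_of_ne hij).elim (hsep i j)
    fun hji => (hsep j i hji).trans_eq (norm_sub_rev _ _)⟩

/-- `(p M^{p-1})^{1/p}`, where `M = 1/n + e^{-d²/8}` bounds the Fock modulus of an average of `n`
normalized kernels with centres at mutual distance at least `d`. -/
noncomputable def kernelAverageBound (p : ℝ) (n : ℕ) (d : ℝ) : ℝ≥0∞ :=
  ENNReal.ofReal (p * ((n : ℝ)⁻¹ + exp (-d ^ 2 / 8)) ^ (p - 1)) ^ (1 / p)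

section Average

variable {ι : Type*} [Fintype ι] [Nonempty ι]

lemma fockNorm_average_kfun_le {p : ℝ} (hp : 1 ≤ p) {v : ι → ℂ} {d : ℝ} (hd : 0 ≤ d)
    (hv : Pairwise fun i j => d ≤ ‖v i - v j‖) :
    fockNorm p (∑ i, (Fintype.card ι : ℂ)⁻¹ • kfun (v i)) ≤
      kernelAverageBound p (Fintype.card ι) d := by
  set n := Fintype.card ι with hn
  have hp0 : 0 < p := zero_lt_one.trans_le hp
  have hn0 : n ≠ 0 := Fintype.card_ne_zero
  have hL1 : fockNorm 1 (∑ i, (n : ℂ)⁻¹ • kfun (v i)) ≤ 1 :=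
    calc fockNorm 1 (∑ i, (n : ℂ)⁻¹ • kfun (v i))
        ≤ ∑ i, fockNorm 1 ((n : ℂ)⁻¹ • kfun (v i)) :=
          fockNorm_sum_le le_rfl _ fun i _ => ((memFock_kfun one_pos _).aemeasurable).const_smul _
      _ = n * (n : ℝ≥0∞)⁻¹ := by
          simp [fockNorm_smul one_pos, fockNorm_kfun one_pos, enorm_natCast_inv hn0, ← hn]
      _ ≤ 1 := ENNReal.mul_inv_le_one _
  have hsup : ∀ z, fockModulus (∑ i, (n : ℂ)⁻¹ • kfun (v i)) z ≤ (n : ℝ)⁻¹ + exp (-d ^ 2 / 8) := by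
    intro z
    calc fockModulus (∑ i, (n : ℂ)⁻¹ • kfun (v i)) z
        ≤ ∑ i, (n : ℝ)⁻¹ * fockModulus (kfun (v i)) z := by
          simp only [fockModulus, Finset.sum_apply, Pi.smul_apply, smul_eq_mul, ← mul_assoc,
            ← Finset.sum_mul]
          gcongr
          refine (norm_sum_le _ _).trans_eq (Finset.sum_congr rfl fun i _ => ?_)
          simp
      _ = (n : ℝ)⁻¹ * ∑ i, exp (-‖z - v i‖ ^ 2 / 2) := by
          simp only [fockModulus_kfun, Finset.mul_sum]
      _ ≤ (n : ℝ)⁻¹ * (1 + n * exp (-d ^ 2 / 8)) := by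
          gcongr
          exact sum_exp_neg_sq_norm_sub_le hd hv z
      _ = (n : ℝ)⁻¹ + exp (-d ^ 2 / 8) := by
          have : (n : ℝ) ≠ 0 := Nat.cast_ne_zero.2 hn0
          field_simp
  rw [kernelAverageBound, one_div, ENNReal.le_rpow_inv_iff hp0]
  calc _ ≤ _ := fockNorm_rpow_le_of_fockModulus_le hp hsup
    _ ≤ _ := mul_le_of_le_one_right' hL1

lemma fockNorm_average_sub_le {q : ℝ} (hq : 1 ≤ q) {F : ι → ℂ → ℂ} {g : ℂ → ℂ}
    (hF : ∀ i, AEMeasurable (F i)) (hg : AEMeasurable g) {η : ℝ≥0∞}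
    (hη : ∀ i, fockNorm q (F i - g) ≤ η) :
    fockNorm q (∑ i, (Fintype.card ι : ℂ)⁻¹ • F i - g) ≤ η := by
  set n := Fintype.card ι with hn
  have hn0 : n ≠ 0 := Fintype.card_ne_zero
  have hsplit : ∑ i, (n : ℂ)⁻¹ • F i - g = ∑ i, (n : ℂ)⁻¹ • (F i - g) := by
    simp only [smul_sub, Finset.sum_sub_distrib]
    rw [Finset.sum_const, Finset.card_univ, ← hn, ← Nat.cast_smul_eq_nsmul ℂ, smul_smul,
      mul_inv_cancel₀ (Nat.cast_ne_zero.2 hn0), one_smul]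
  calc fockNorm q (∑ i, (n : ℂ)⁻¹ • F i - g)
      ≤ ∑ i, fockNorm q ((n : ℂ)⁻¹ • (F i - g)) :=
        hsplit ▸ fockNorm_sum_le hq _ fun i _ => ((hF i).sub hg).const_smul _
    _ ≤ ∑ _i : ι, (n : ℝ≥0∞)⁻¹ * η := by
        gcongr with i
        rw [fockNorm_smul (zero_lt_one.trans_le hq), enorm_natCast_inv hn0]
        gcongr
        exact hη i
    _ = η := by
        rw [Finset.sum_const, Finset.card_univ, ← hn, nsmul_eq_mul, ← mul_assoc,
          ENNReal.mul_inv_cancel (by simpa using hn0) (by simp), one_mul]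

end Average

lemma tendsto_kernelAverageBound {p : ℝ} (hp : 1 < p) :
    Tendsto (fun m : ℕ => kernelAverageBound p (m + 1) m) atTop (𝓝 0) := by
  have hM : Tendsto (fun m : ℕ => ((m + 1 : ℕ) : ℝ)⁻¹ + exp (-(m : ℝ) ^ 2 / 8)) atTop (𝓝 0) := by
    have hinv : Tendsto (fun m : ℕ => ((m + 1 : ℕ) : ℝ)⁻¹) atTop (𝓝 0) :=
      tendsto_inv_atTop_zero.comp (tendsto_natCast_atTop_atTop.comp (tendsto_add_atTop_nat 1))
    have hexp : Tendsto (fun m : ℕ => exp (-(m : ℝ) ^ 2 / 8)) atTop (𝓝 0) := by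
      refine tendsto_exp_atBot.comp (Tendsto.atBot_div_const (by norm_num) ?_)
      exact tendsto_neg_atTop_atBot.comp
        ((tendsto_pow_atTop two_ne_zero).comp tendsto_natCast_atTop_atTop)
    simpa using hinv.add hexp
  have hcont : Continuous fun M : ℝ => ENNReal.ofReal (p * M ^ (p - 1)) ^ (1 / p) :=
    (ENNReal.continuous_rpow_const).comp (ENNReal.continuous_ofReal.comp
      (continuous_const.mul (continuous_rpow_const (by linarith))))
  have hzero : ENNReal.ofReal (p * (0 : ℝ) ^ (p - 1)) ^ (1 / p) = 0 := by
    rw [zero_rpow (by linarith), mul_zero, ENNReal.ofReal_zero,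
      ENNReal.zero_rpow_of_pos (by positivity)]
  have h := (hcont.tendsto 0).comp hM
  rw [hzero] at h
  exact h

lemma FockBounded.memFock {p q : ℝ} {T : (ℂ → ℂ) → ℂ → ℂ} (hT : FockBounded p q T)
    {f : ℂ → ℂ} (hf : MemFock p f) : MemFock q (T f) :=
  hT.elim fun _ hC => (hC.2 f hf).1

lemma fockNorm_le_of_kfun_sub_le {p q : ℝ} (hp : 1 ≤ p) (hq : 1 ≤ q)
    {T : (ℂ → ℂ) → ℂ → ℂ} (hT : IsLinearMap ℂ T) {C : ℝ}
    (hC : ∀ f, MemFock p f → MemFock q (T f) ∧ fockNorm q (T f) ≤ ENNReal.ofReal C * fockNorm p f)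
    {g : ℂ → ℂ} (hg : AEMeasurable g) {ι : Type*} [Fintype ι] [Nonempty ι] {v : ι → ℂ} {d : ℝ}
    (hd : 0 ≤ d) (hv : Pairwise fun i j => d ≤ ‖v i - v j‖) {η : ℝ≥0∞}
    (hη : ∀ i, fockNorm q (T (kfun (v i)) - g) ≤ η) :
    fockNorm q g ≤ η + ENNReal.ofReal C * kernelAverageBound p (Fintype.card ι) d := by
  have hp0 : 0 < p := zero_lt_one.trans_le hp
  set s := ∑ i, (Fintype.card ι : ℂ)⁻¹ • kfun (v i)
  have hsp : fockNorm p s ≤ kernelAverageBound p (Fintype.card ι) d :=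
    fockNorm_average_kfun_le hp hd hv
  have hs : MemFock p s := by
    refine ⟨?_, hsp.trans_lt (ENNReal.rpow_lt_top_of_nonneg (by positivity) ENNReal.ofReal_ne_top)⟩
    simp only [s]
    exact Differentiable.sum fun i _ => (memFock_kfun hp0 (v i)).1.const_smul _
  have hTs : T s = ∑ i, (Fintype.card ι : ℂ)⁻¹ • T (kfun (v i)) := by
    let L := IsLinearMap.mk' T hT
    change L s = ∑ i, _ • L (kfun (v i))
    simp only [s, map_sum, map_smul]
  have hTk : ∀ i, AEMeasurable (T (kfun (v i))) := fun i =>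
    (hC _ (memFock_kfun hp0 (v i))).1.aemeasurable
  calc fockNorm q g
      ≤ fockNorm q (T s - g) + fockNorm q (T s) := by
        rw [add_comm, fockNorm_sub_comm]
        exact fockNorm_le_add_sub hq hg (hC s hs).1.aemeasurable
    _ ≤ η + ENNReal.ofReal C * kernelAverageBound p (Fintype.card ι) d := by
        gcongr
        · exact hTs ▸ fockNorm_average_sub_le hq hTk hg hη
        · exact (hC s hs).2.trans (by gcongr)

lemma fockNorm_eq_zero_of_tendsto_kfun {p q : ℝ} (hp : 1 < p) (hq : 1 ≤ q)
    {T : (ℂ → ℂ) → ℂ → ℂ} (hT : IsLinearMap ℂ T) (hTb : FockBounded p q T) {u : ℕ → ℂ}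
    (hu : Tendsto (fun k => ‖u k‖) atTop atTop) {g : ℂ → ℂ} (hg : AEMeasurable g)
    (hconv : Tendsto (fun k => fockNorm q (T (kfun (u k)) - g)) atTop (𝓝 0)) :
    fockNorm q g = 0 := by
  obtain ⟨C, -, hC⟩ := hTb
  refine le_antisymm (le_of_forall_gt_imp_ge_of_dense fun η hη => ?_) zero_le
  obtain ⟨K, hK⟩ := eventually_atTop.1 (hconv.eventually_lt_const hη)
  have hbound : ∀ m : ℕ, fockNorm q g ≤ η + ENNReal.ofReal C * kernelAverageBound p (m + 1) m := by
    intro m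
    obtain ⟨κ, hκK, hκ⟩ := exists_pairwise_dist_le_of_tendsto_norm hu K m
    simpa using fockNorm_le_of_kfun_sub_le hp.le hq hT hC hg (v := fun i : Fin (m + 1) => u (κ i))
      (Nat.cast_nonneg m) (fun i j hij => hκ (Fin.val_injective.ne hij)) fun i => (hK _ (hκK i)).le
  have hlim : Tendsto (fun m : ℕ => η + ENNReal.ofReal C * kernelAverageBound p (m + 1) m) atTop
      (𝓝 η) := by
    simpa using tendsto_const_nhds.add
      (ENNReal.Tendsto.const_mul (tendsto_kernelAverageBound hp) (Or.inr ENNReal.ofReal_ne_top))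
  exact ge_of_tendsto' hlim hbound

/-- If `T : F^p → F^q` is linear and compact (`1 < p, q < ∞`), then
`‖T k_{w_n}‖_q → 0` whenever `|w_n| → ∞`. -/
theorem compact_kernel_tendsto_zero (p q : ℝ) (hp : 1 < p) (hq : 1 < q)
    (T : (ℂ → ℂ) → ℂ → ℂ) (hTlin : IsLinearMap ℂ T) (hTc : FockCompact p q T)
    (w : ℕ → ℂ) (hw : Tendsto (fun n => ‖w n‖) atTop atTop) :
    Tendsto (fun n => fockNorm q (T (kfun (w n)))) atTop (nhds 0) := by
  obtain ⟨hTb, hTcpt⟩ := hTc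
  have hp0 : 0 < p := zero_lt_one.trans hp
  refine tendsto_of_subseq_tendsto fun ns hns => ?_
  obtain ⟨φ, hφ, g, hg, hconv⟩ := hTcpt (fun k => kfun (w (ns k)))
    fun k => ⟨memFock_kfun hp0 _, (fockNorm_kfun hp0 _).le⟩
  have hg0 : fockNorm q g = 0 :=
    fockNorm_eq_zero_of_tendsto_kfun hp hq.le hTlin hTb (u := fun k => w (ns (φ k)))
      (hw.comp (hns.comp hφ.tendsto_atTop)) hg.aemeasurable hconv
  refine ⟨φ, tendsto_of_tendsto_of_tendsto_of_le_of_le tendsto_const_nhds hconv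
    (fun _ => zero_le) fun k => ?_⟩
  have hTk := (hTb.memFock (memFock_kfun hp0 (w (ns (φ k))))).aemeasurable
  exact (fockNorm_le_add_sub hq.le hTk hg.aemeasurable).trans_eq (by rw [hg0, zero_add]; rfl)
end

section
/- Let 0 < q < p < ∞. Then lim_{n→∞} ‖zⁿ‖_p / ‖zⁿ‖_q = 0, where zⁿ denotes the monomial z ↦ zⁿ. -/
open MeasureTheory Filter Bornology
open scoped ENNReal

/-!
With `w(z) = |f(z)| e^{-|z|²/2}` one has `‖f‖_p^p = (p/2π) ∫ w^p`. For `f = zⁿ` the weight `w`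
is maximal at `|z| = √n`, with value `Mₙ`, and stays above `e^{-3/2} Mₙ` on the annulus
`√n ≤ |z| ≤ √n + 1`, whose area `π(2√n + 1)` tends to infinity. The bound `w^p ≤ Mₙ^{p-q} w^q`
gives `‖zⁿ‖_p^p ≲ Mₙ^{p-q} ‖zⁿ‖_q^q`, the annulus gives `‖zⁿ‖_q^q ≳ Mₙ^q √n`, and the powers of
`Mₙ` cancel in the ratio, leaving `‖zⁿ‖_p / ‖zⁿ‖_q ≲ n^{(1/p - 1/q)/2}`.
-/

open Real

noncomputable def fockWeight (f : ℂ → ℂ) (z : ℂ) : ℝ :=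
  ‖f z‖ * exp (-‖z‖ ^ 2 / 2)

lemma fockWeight_nonneg (f : ℂ → ℂ) (z : ℂ) : 0 ≤ fockWeight f z := by
  unfold fockWeight; positivity

lemma fockNorm_eq (p : ℝ) (f : ℂ → ℂ) :
    fockNorm p f = (ENNReal.ofReal (p / (2 * π)) *
      ∫⁻ z, ENNReal.ofReal (fockWeight f z ^ p)) ^ (1 / p) := by
  unfold fockNorm fockWeight
  congr 3
  ext z
  rw [mul_rpow (norm_nonneg _) (exp_pos _).le, ← exp_mul]
  ring_nf

lemma fockNorm_rpow {p : ℝ} (hp : 0 < p) (f : ℂ → ℂ) :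
    fockNorm p f ^ p = ENNReal.ofReal (p / (2 * π)) *
      ∫⁻ z, ENNReal.ofReal (fockWeight f z ^ p) := by
  rw [fockNorm_eq, one_div, ENNReal.rpow_inv_rpow hp.ne']

lemma fockNorm_rpow_le_of_fockWeight_le {p q M : ℝ} {f : ℂ → ℂ} (hq : 0 < q) (hqp : q ≤ p)
    (hM : ∀ z, fockWeight f z ≤ M) :
    fockNorm p f ^ p ≤ ENNReal.ofReal (p / q * M ^ (p - q)) * fockNorm q f ^ q := by
  have hM0 : 0 ≤ M := (fockWeight_nonneg f 0).trans (hM 0)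
  have hpoint : ∀ z, ENNReal.ofReal (fockWeight f z ^ p)
      ≤ ENNReal.ofReal (M ^ (p - q)) * ENNReal.ofReal (fockWeight f z ^ q) := fun z => by
    have hw := fockWeight_nonneg f z
    rw [← ENNReal.ofReal_mul (by positivity)]
    refine ENNReal.ofReal_le_ofReal ?_
    calc fockWeight f z ^ p = fockWeight f z ^ (p - q) * fockWeight f z ^ q := by
          rw [← rpow_add' hw (by linarith), sub_add_cancel]
      _ ≤ M ^ (p - q) * fockWeight f z ^ q :=
          mul_le_mul_of_nonneg_right (rpow_le_rpow hw (hM z) (by linarith)) (by positivity)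
  rw [fockNorm_rpow (hq.trans_le hqp), fockNorm_rpow hq]
  calc ENNReal.ofReal (p / (2 * π)) * ∫⁻ z, ENNReal.ofReal (fockWeight f z ^ p)
      ≤ ENNReal.ofReal (p / (2 * π)) *
          (ENNReal.ofReal (M ^ (p - q)) * ∫⁻ z, ENNReal.ofReal (fockWeight f z ^ q)) := by
        rw [← lintegral_const_mul' (ENNReal.ofReal (M ^ (p - q))) _ ENNReal.ofReal_ne_top]
        exact mul_le_mul_right (lintegral_mono hpoint) _
    _ = _ := by
        have hp : 0 < p := hq.trans_le hqp
        rw [← mul_assoc, ← mul_assoc, ← ENNReal.ofReal_mul (by positivity),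
          ← ENNReal.ofReal_mul (by positivity)]
        congr 2
        field_simp

lemma le_fockNorm_rpow_of_le_fockWeight {q m : ℝ} {f : ℂ → ℂ} {S : Set ℂ} (hq : 0 < q)
    (hm0 : 0 ≤ m) (hS : MeasurableSet S) (hm : ∀ z ∈ S, m ≤ fockWeight f z) :
    ENNReal.ofReal (q / (2 * π) * m ^ q) * volume S ≤ fockNorm q f ^ q := by
  rw [fockNorm_rpow hq, ENNReal.ofReal_mul (by positivity), mul_assoc, ← setLIntegral_const]
  refine mul_le_mul_right ?_ _
  calc ∫⁻ _ in S, ENNReal.ofReal (m ^ q) ≤ ∫⁻ z in S, ENNReal.ofReal (fockWeight f z ^ q) := by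
        refine setLIntegral_mono' hS fun z hz => ENNReal.ofReal_le_ofReal ?_
        exact rpow_le_rpow hm0 (hm z hz) hq.le
    _ ≤ _ := setLIntegral_le_lintegral _ _

lemma div_le_of_rpow_le_mul_rpow {a b C L p q : ℝ} (hq : 0 < q) (hqp : q < p) (ha : 0 ≤ a)
    (hb : 0 ≤ b) (hC : 0 ≤ C) (hL : 0 < L) (hab : a ^ p ≤ C * b ^ q) (hLb : L ≤ b ^ q) :
    a / b ≤ C ^ (1 / p) * L ^ (1 / p - 1 / q) := by
  have hp : 0 < p := hq.trans hqp
  have hb0 : 0 < b := hb.lt_of_ne fun h => by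
    rw [← h, zero_rpow hq.ne'] at hLb; linarith
  have hexp : 1 / p - 1 / q ≤ 0 := by
    rw [sub_nonpos]; exact one_div_le_one_div_of_le hq hqp.le
  have ha' : a ≤ C ^ (1 / p) * b ^ (q / p) := by
    calc a = (a ^ p) ^ (1 / p) := by rw [one_div, rpow_rpow_inv ha hp.ne']
      _ ≤ (C * b ^ q) ^ (1 / p) := rpow_le_rpow (by positivity) hab (by positivity)
      _ = C ^ (1 / p) * b ^ (q / p) := by
        rw [mul_rpow hC (by positivity), ← rpow_mul hb, mul_one_div]
  calc a / b ≤ C ^ (1 / p) * b ^ (q / p) / b := by gcongr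
    _ = C ^ (1 / p) * (b ^ q) ^ (1 / p - 1 / q) := by
      rw [← rpow_mul hb, mul_div_assoc, ← rpow_sub_one hb0.ne']
      congr 2
      field_simp
    _ ≤ C ^ (1 / p) * L ^ (1 / p - 1 / q) :=
      mul_le_mul_of_nonneg_left (rpow_le_rpow_of_nonpos hL hLb hexp) (by positivity)

lemma fockNorm_div_fockNorm_le {p q κ m V : ℝ} {f : ℂ → ℂ} {S : Set ℂ} (hq : 0 < q)
    (hqp : q < p) (hm : 0 < m) (hV : 0 < V) (hS : MeasurableSet S)
    (hVS : ENNReal.ofReal V ≤ volume S) (hup : ∀ z, fockWeight f z ≤ κ * m)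
    (hlow : ∀ z ∈ S, m ≤ fockWeight f z) :
    (fockNorm p f).toReal / (fockNorm q f).toReal ≤
      (p / q) ^ (1 / p) * κ ^ (1 - q / p) * (q * V / (2 * π)) ^ (1 / p - 1 / q) := by
  have hp : 0 < p := hq.trans hqp
  have hκ : 0 ≤ κ := nonneg_of_mul_nonneg_left ((fockWeight_nonneg f 0).trans (hup 0)) hm
  by_cases htop : fockNorm q f = ⊤
  · rw [htop, ENNReal.toReal_top, div_zero]
    positivity
  have htop' : fockNorm q f ^ q ≠ ⊤ := ENNReal.rpow_ne_top_of_nonneg hq.le htop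
  have hupper := fockNorm_rpow_le_of_fockWeight_le hq hqp.le hup
  have hlower : ENNReal.ofReal (q / (2 * π) * m ^ q * V) ≤ fockNorm q f ^ q := by
    rw [ENNReal.ofReal_mul (by positivity)]
    exact (mul_le_mul_right hVS _).trans (le_fockNorm_rpow_of_le_fockWeight hq hm.le hS hlow)
  have hab : (fockNorm p f).toReal ^ p ≤
      p / q * (κ * m) ^ (p - q) * (fockNorm q f).toReal ^ q := by
    have := ENNReal.toReal_mono (ENNReal.mul_ne_top ENNReal.ofReal_ne_top htop') hupper
    rwa [ENNReal.toReal_mul, ENNReal.toReal_ofReal (by positivity), ← ENNReal.toReal_rpow,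
      ← ENNReal.toReal_rpow] at this
  have hLb : q / (2 * π) * m ^ q * V ≤ (fockNorm q f).toReal ^ q := by
    rw [ENNReal.toReal_rpow]
    exact (ENNReal.ofReal_le_iff_le_toReal htop').1 hlower
  refine (div_le_of_rpow_le_mul_rpow hq hqp ENNReal.toReal_nonneg ENNReal.toReal_nonneg
    (by positivity) (by positivity) hab hLb).trans_eq ?_
  rw [mul_rpow (by positivity) (by positivity), mul_rpow hκ hm.le,
    mul_rpow (x := κ ^ (p - q)) (by positivity) (by positivity), ← rpow_mul hκ,
    ← rpow_mul hm.le, show q / (2 * π) * m ^ q * V = m ^ q * (q * V / (2 * π)) by ring,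
    mul_rpow (by positivity) (by positivity), ← rpow_mul hm.le]
  have hexp : (p - q) * (1 / p) + q * (1 / p - 1 / q) = 0 := by field_simp; ring
  calc (p / q) ^ (1 / p) * (κ ^ ((p - q) * (1 / p)) * m ^ ((p - q) * (1 / p))) *
        (m ^ (q * (1 / p - 1 / q)) * (q * V / (2 * π)) ^ (1 / p - 1 / q))
      = (p / q) ^ (1 / p) * κ ^ ((p - q) * (1 / p)) *
          m ^ ((p - q) * (1 / p) + q * (1 / p - 1 / q)) * (q * V / (2 * π)) ^ (1 / p - 1 / q) := by
        rw [rpow_add hm]; ring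
    _ = _ := by
        rw [hexp, rpow_zero, mul_one]
        congr 3
        field_simp

lemma pow_mul_exp_neg_sq_eq {x : ℝ} (hx : 0 < x) (n : ℕ) :
    x ^ n * exp (-x ^ 2 / 2) = exp (n * log x - x ^ 2 / 2) := by
  rw [sub_eq_add_neg, exp_add, exp_nat_mul, exp_log hx, neg_div]

lemma pow_mul_exp_neg_sq_le (n : ℕ) {r : ℝ} (hr : 0 ≤ r) :
    r ^ n * exp (-r ^ 2 / 2) ≤ √n ^ n * exp (-n / 2) := by
  rcases Nat.eq_zero_or_pos n with rfl | hn
  · simp only [pow_zero, one_mul, CharP.cast_eq_zero, neg_zero, zero_div, exp_zero,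
      exp_le_one_iff]
    nlinarith [sq_nonneg r]
  rcases hr.eq_or_lt with rfl | hr
  · rw [zero_pow hn.ne', zero_mul]; positivity
  set s := √(n : ℝ)
  have hs : 0 < s := sqrt_pos.2 (by exact_mod_cast hn)
  have hsn : s ^ 2 = n := sq_sqrt (Nat.cast_nonneg n)
  rw [← hsn, pow_mul_exp_neg_sq_eq hr, pow_mul_exp_neg_sq_eq hs, ← hsn]
  refine exp_le_exp.2 ?_
  have hlog : log r - log s ≤ r / s - 1 := by
    rw [← log_div hr.ne' hs.ne']; exact log_le_sub_one_of_pos (by positivity)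
  have : s ^ 2 * (r / s - 1) = s * (r - s) := by field_simp
  nlinarith [sq_nonneg (r - s), mul_le_mul_of_nonneg_left hlog (sq_nonneg s)]

lemma pow_mul_exp_neg_sq_ge {n : ℕ} (hn : 0 < n) {r : ℝ} (hr₁ : √n ≤ r) (hr₂ : r ≤ √n + 1) :
    exp (-3 / 2) * (√n ^ n * exp (-n / 2)) ≤ r ^ n * exp (-r ^ 2 / 2) := by
  set s := √(n : ℝ)
  have hs : 0 < s := sqrt_pos.2 (by exact_mod_cast hn)
  have hr : 0 < r := hs.trans_le hr₁
  have hsn : s ^ 2 = n := sq_sqrt (Nat.cast_nonneg n)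
  rw [← hsn, pow_mul_exp_neg_sq_eq hr, pow_mul_exp_neg_sq_eq hs, ← exp_add, ← hsn]
  refine exp_le_exp.2 ?_
  have hlog : 1 - s / r ≤ log r - log s := by
    have := log_le_sub_one_of_pos (div_pos hs hr)
    rw [log_div hs.ne' hr.ne'] at this; linarith
  -- `r (r² - s²) / 2 - s² (r - s) = (r - s)² (r + 2s) / 2 ≤ 3r / 2` as `0 ≤ r - s ≤ 1`.
  have hcubic : r * ((r ^ 2 - s ^ 2) / 2 - 3 / 2) ≤ r * (s ^ 2 * (1 - s / r)) := by
    have : r * (s ^ 2 * (1 - s / r)) = s ^ 2 * (r - s) := by field_simp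
    rw [this]
    nlinarith [mul_le_mul_of_nonneg_right
      (show (r - s) ^ 2 ≤ 1 by nlinarith) (show 0 ≤ r + 2 * s by positivity)]
  have := le_of_mul_le_mul_left hcubic hr
  nlinarith [mul_le_mul_of_nonneg_left hlog (sq_nonneg s)]

lemma Complex.volume_closedBall_diff_ball (a : ℂ) {r R : ℝ} (hr : 0 ≤ r) (hrR : r ≤ R) :
    volume (Metric.closedBall a R \ Metric.ball a r) = ENNReal.ofReal (π * (R ^ 2 - r ^ 2)) := by
  rw [measure_sdiff (Metric.ball_subset_closedBall.trans (Metric.closedBall_subset_closedBall hrR))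
    measurableSet_ball.nullMeasurableSet measure_ball_lt_top.ne, Complex.volume_closedBall,
    Complex.volume_ball, mul_sub, ENNReal.ofReal_sub _ (by positivity)]
  rw [ENNReal.ofReal_mul pi_pos.le, ENNReal.ofReal_mul pi_pos.le, ← NNReal.coe_real_pi,
    ENNReal.ofReal_coe_nnreal, ENNReal.ofReal_pow (hr.trans hrR), ENNReal.ofReal_pow hr,
    mul_comm (ENNReal.ofReal R ^ 2), mul_comm (ENNReal.ofReal r ^ 2)]

lemma fockWeight_pow (n : ℕ) (z : ℂ) :
    fockWeight (fun z => z ^ n) z = ‖z‖ ^ n * exp (-‖z‖ ^ 2 / 2) := by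
  rw [fockWeight, norm_pow]

lemma monomial_fockNorm_div_le {p q : ℝ} (hq : 0 < q) (hqp : q < p) {n : ℕ} (hn : 0 < n) :
    (fockNorm p (fun z : ℂ => z ^ n)).toReal / (fockNorm q (fun z : ℂ => z ^ n)).toReal ≤
      (p / q) ^ (1 / p) * exp (3 / 2) ^ (1 - q / p) * (q * (2 * √n + 1) / 2) ^ (1 / p - 1 / q) := by
  have hs : 0 ≤ √(n : ℝ) := sqrt_nonneg _
  have hS := Complex.volume_closedBall_diff_ball 0 hs (le_add_of_nonneg_right zero_le_one)
  have hV : q * (π * ((√n + 1) ^ 2 - √n ^ 2)) / (2 * π) = q * (2 * √n + 1) / 2 := by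
    field_simp; ring
  rw [← hV]
  refine fockNorm_div_fockNorm_le (m := exp (-3 / 2) * (√n ^ n * exp (-n / 2))) hq hqp
    (by positivity) (by nlinarith [pi_pos])
    (measurableSet_closedBall.diff measurableSet_ball) hS.ge (fun z => ?_) (fun z hz => ?_)
  · rw [fockWeight_pow, ← mul_assoc, ← exp_add, show (3 / 2 + -3 / 2 : ℝ) = 0 by norm_num,
      exp_zero, one_mul]
    exact pow_mul_exp_neg_sq_le n (norm_nonneg z)
  · simp only [Set.mem_sdiff, Metric.mem_closedBall, Metric.mem_ball, dist_zero_right,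
      not_lt] at hz
    rw [fockWeight_pow]
    exact pow_mul_exp_neg_sq_ge hn hz.2 hz.1

/-- For `0 < q < p < ∞`, `‖zⁿ‖_p / ‖zⁿ‖_q → 0` as `n → ∞`. -/
theorem monomial_norm_ratio_tendsto_zero (p q : ℝ) (hq : 0 < q) (hqp : q < p) :
    Filter.Tendsto (fun n : ℕ => (fockNorm p (fun z : ℂ => z ^ n)).toReal /
        (fockNorm q (fun z : ℂ => z ^ n)).toReal) Filter.atTop (nhds 0) := by
  have hδ : 0 < 1 / q - 1 / p := sub_pos.2 (one_div_lt_one_div_of_lt hq hqp)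
  have hV : Tendsto (fun n : ℕ => q * (2 * √n + 1) / 2) atTop atTop := by
    refine Tendsto.atTop_div_const two_pos (Tendsto.const_mul_atTop hq ?_)
    exact tendsto_atTop_add_const_right _ _
      ((tendsto_sqrt_atTop.comp tendsto_natCast_atTop_atTop).const_mul_atTop two_pos)
  have hbound := ((tendsto_rpow_neg_atTop hδ).comp hV).const_mul
    ((p / q) ^ (1 / p) * exp (3 / 2) ^ (1 - q / p))
  rw [mul_zero, neg_sub] at hbound
  refine squeeze_zero' (Eventually.of_forall fun n => by positivity)
    ((eventually_gt_atTop 0).mono fun n hn => ?_) hbound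
  exact monomial_fockNorm_div_le hq hqp hn
end
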